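/- For all integers N ≥ 0 and 0 ≤ j ≤ N, one has (1/j!) ∑_{k=j}^{N} S_{-1/2}(N,k) (-1)^k k! (k choose j) = (-1)^N S_{-1/2}(N,j). -/

import Mathlib

/-- Non-central Stirling numbers of the second kind with parameter `α`. -/
def Snc (α : ℚ) : ℕ → ℕ → ℚ
  | 0, 0 => 1
  | 0, _ + 1 => 0
  | n + 1, 0 => (-α) ^ (n + 1)
  | n + 1, k + 1 => Snc α n k + ((k + 1 : ℚ) - α) * Snc α n (k + 1)

lemma Snc_eq_zero (α : ℚ) : ∀ n k : ℕ, n < k → Snc α n k = 0 := by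
  intro n
  induction n with
  | zero =>
      intro k hk
      match k, hk with
      | k + 1, _ => rfl
  | succ n ih =>
      intro k hk
      match k, hk with
      | m + 1, hk =>
        have h1 : n < m := by omega
        have h2 : n < m + 1 := by omega
        show Snc α n m + ((m + 1 : ℚ) - α) * Snc α n (m + 1) = 0
        rw [ih m h1, ih (m + 1) h2]; ring

lemma Snc_zero (α : ℚ) : ∀ n : ℕ, Snc α n 0 = (-α) ^ n := by
  intro n
  cases n with
  | zero => simp [Snc]
  | succ n => rfl

lemma Snc_rec (α : ℚ) (n k : ℕ) :
    Snc α (n + 1) (k + 1) = Snc α n k + ((k + 1 : ℚ) - α) * Snc α n (k + 1) := rfl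

/-- per-term binomial identity -/
lemma term_id (k m : ℕ) :
    (-1 : ℚ) ^ (k + 1) * (Nat.factorial (k + 1) : ℚ) * (((k + 1).choose (m + 1)) : ℚ) +
      ((k : ℚ) + 1 / 2) * ((-1 : ℚ) ^ k * (Nat.factorial k : ℚ) * ((k.choose (m + 1)) : ℚ)) =
    -(((m : ℚ)) + 3 / 2) * ((-1 : ℚ) ^ k * (Nat.factorial k : ℚ) * ((k.choose (m + 1)) : ℚ)) -
      ((m : ℚ) + 1) * ((-1 : ℚ) ^ k * (Nat.factorial k : ℚ) * ((k.choose m) : ℚ)) := by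
  have h1 : (((k + 1).choose (m + 1)) : ℚ) = ((k.choose m) : ℚ) + ((k.choose (m + 1)) : ℚ) := by
    rw [Nat.choose_succ_succ]; push_cast; ring
  have h2 : ((k : ℚ) + 1) * ((k.choose m) : ℚ) =
      (((k.choose m) : ℚ) + ((k.choose (m + 1)) : ℚ)) * ((m : ℚ) + 1) := by
    rw [← h1]
    have := Nat.add_one_mul_choose_eq k m
    have h := congrArg (fun x : ℕ => (x : ℚ)) this
    push_cast at h
    linarith [h]
  have h3 : (Nat.factorial (k + 1) : ℚ) = ((k : ℚ) + 1) * (Nat.factorial k : ℚ) := by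
    rw [Nat.factorial_succ]; push_cast; ring
  rw [h1, h3, pow_succ]
  linear_combination (-((-1 : ℚ) ^ k * (Nat.factorial k : ℚ))) * h2

lemma shift_sum (F : ℕ → ℚ) (n : ℕ) (hz : F (n + 1) = 0) :
    ∑ k ∈ Finset.range (n + 1), F (k + 1) = (∑ k ∈ Finset.range (n + 1), F k) - F 0 := by
  have h1 := Finset.sum_range_succ' F (n + 1)
  have h2 := Finset.sum_range_succ F (n + 1)
  rw [h2, hz, add_zero] at h1
  linarith

lemma key (n : ℕ) : ∀ j : ℕ,
    ∑ k ∈ Finset.range (n + 1),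
      Snc (-1/2) n k * (-1) ^ k * (Nat.factorial k : ℚ) * (k.choose j : ℚ) =
    (-1) ^ n * (Nat.factorial j : ℚ) * Snc (-1/2) n j := by
  induction n with
  | zero =>
      intro j
      cases j with
      | zero => simp [Snc]
      | succ m => simp [Snc]
  | succ n ih =>
      intro j
      have hrec : ∀ k : ℕ, Snc (-1/2) (n + 1) (k + 1)
          = Snc (-1/2) n k + ((k : ℚ) + 3 / 2) * Snc (-1/2) n (k + 1) := by
        intro k
        rw [Snc_rec]
        ring_nf
      -- peel off k = 0
      rw [Finset.sum_range_succ']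
      cases j with
      | zero =>
          -- the H-sum shift
          have hH : ∑ k ∈ Finset.range (n + 1),
                (((k : ℚ) + 1) + 1 / 2) * Snc (-1/2) n (k + 1) *
                  ((-1) ^ (k + 1) * (Nat.factorial (k + 1) : ℚ) * (((k + 1).choose 0) : ℚ))
              = (∑ k ∈ Finset.range (n + 1),
                  ((k : ℚ) + 1 / 2) * Snc (-1/2) n k *
                    ((-1) ^ k * (Nat.factorial k : ℚ) * ((k.choose 0) : ℚ)))
                - (1 / 2) * Snc (-1/2) n 0 := by
            set F : ℕ → ℚ := fun k =>
              ((k : ℚ) + 1 / 2) * Snc (-1/2) n k *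
                ((-1) ^ k * (Nat.factorial k : ℚ) * ((k.choose 0) : ℚ)) with hF
            have hlast : Snc (-1/2) n (n + 1) = 0 := Snc_eq_zero _ n (n + 1) (by omega)
            have hz : F (n + 1) = 0 := by simp [hF, hlast]
            have hstep : ∑ k ∈ Finset.range (n + 1),
                (((k : ℚ) + 1) + 1 / 2) * Snc (-1/2) n (k + 1) *
                  ((-1) ^ (k + 1) * (Nat.factorial (k + 1) : ℚ) * (((k + 1).choose 0) : ℚ))
                = ∑ k ∈ Finset.range (n + 1), F (k + 1) := by
              apply Finset.sum_congr rfl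
              intro k _
              simp only [hF]
              push_cast
              ring
            rw [hstep, shift_sum F n hz]
            simp [hF]
          calc (∑ k ∈ Finset.range (n + 1),
                Snc (-1/2) (n + 1) (k + 1) * (-1) ^ (k + 1) * (Nat.factorial (k + 1) : ℚ) *
                  (((k + 1).choose 0) : ℚ))
                + Snc (-1/2) (n + 1) 0 * (-1) ^ 0 * (Nat.factorial 0 : ℚ) * ((Nat.choose 0 0) : ℚ)
              = (∑ k ∈ Finset.range (n + 1),
                  (Snc (-1/2) n k *
                    ((-1) ^ (k + 1) * (Nat.factorial (k + 1) : ℚ) * (((k + 1).choose 0) : ℚ))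
                  + (((k : ℚ) + 1) + 1 / 2) * Snc (-1/2) n (k + 1) *
                    ((-1) ^ (k + 1) * (Nat.factorial (k + 1) : ℚ) * (((k + 1).choose 0) : ℚ))))
                + (1 / 2) * Snc (-1/2) n 0 := by
                rw [Snc_zero]
                congr 1
                · apply Finset.sum_congr rfl
                  intro k _
                  rw [hrec k]
                  ring
                · rw [Snc_zero]; norm_num [pow_succ]; ring
            _ = (∑ k ∈ Finset.range (n + 1),
                  Snc (-1/2) n k *
                    ((-1) ^ (k + 1) * (Nat.factorial (k + 1) : ℚ) * (((k + 1).choose 0) : ℚ)))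
                + ((∑ k ∈ Finset.range (n + 1),
                  ((k : ℚ) + 1 / 2) * Snc (-1/2) n k *
                    ((-1) ^ k * (Nat.factorial k : ℚ) * ((k.choose 0) : ℚ)))
                  - (1 / 2) * Snc (-1/2) n 0)
                + (1 / 2) * Snc (-1/2) n 0 := by
                rw [Finset.sum_add_distrib, hH]
            _ = ∑ k ∈ Finset.range (n + 1),
                  (-(1 / 2)) * (Snc (-1/2) n k * (-1) ^ k * (Nat.factorial k : ℚ) *
                    ((k.choose 0) : ℚ)) := by
                have hcollapse : ∀ A B c : ℚ, A + (B - c) + c = A + B := by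
                  intros; ring
                rw [hcollapse, ← Finset.sum_add_distrib]
                apply Finset.sum_congr rfl
                intro k _
                simp only [Nat.choose_zero_right, Nat.cast_one, Nat.factorial_succ, pow_succ]
                push_cast
                ring
            _ = (-1) ^ (n + 1) * (Nat.factorial 0 : ℚ) * Snc (-1/2) (n + 1) 0 := by
                rw [← Finset.mul_sum, ih 0]
                rw [Snc_zero, Snc_zero]
                push_cast
                ring
      | succ m =>
          have hH : ∑ k ∈ Finset.range (n + 1),
                (((k : ℚ) + 1) + 1 / 2) * Snc (-1/2) n (k + 1) *
                  ((-1) ^ (k + 1) * (Nat.factorial (k + 1) : ℚ) * (((k + 1).choose (m + 1)) : ℚ))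
              = ∑ k ∈ Finset.range (n + 1),
                  ((k : ℚ) + 1 / 2) * Snc (-1/2) n k *
                    ((-1) ^ k * (Nat.factorial k : ℚ) * ((k.choose (m + 1)) : ℚ)) := by
            set F : ℕ → ℚ := fun k =>
              ((k : ℚ) + 1 / 2) * Snc (-1/2) n k *
                ((-1) ^ k * (Nat.factorial k : ℚ) * ((k.choose (m + 1)) : ℚ)) with hF
            have hlast : Snc (-1/2) n (n + 1) = 0 := Snc_eq_zero _ n (n + 1) (by omega)
            have hz : F (n + 1) = 0 := by simp [hF, hlast]
            have hstep : ∑ k ∈ Finset.range (n + 1),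
                (((k : ℚ) + 1) + 1 / 2) * Snc (-1/2) n (k + 1) *
                  ((-1) ^ (k + 1) * (Nat.factorial (k + 1) : ℚ) * (((k + 1).choose (m + 1)) : ℚ))
                = ∑ k ∈ Finset.range (n + 1), F (k + 1) := by
              apply Finset.sum_congr rfl
              intro k _
              simp only [hF]
              push_cast
              ring
            rw [hstep, shift_sum F n hz]
            simp [hF]
          calc (∑ k ∈ Finset.range (n + 1),
                Snc (-1/2) (n + 1) (k + 1) * (-1) ^ (k + 1) * (Nat.factorial (k + 1) : ℚ) *
                  (((k + 1).choose (m + 1)) : ℚ))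
                + Snc (-1/2) (n + 1) 0 * (-1) ^ 0 * (Nat.factorial 0 : ℚ) *
                  ((Nat.choose 0 (m + 1)) : ℚ)
              = ∑ k ∈ Finset.range (n + 1),
                  (Snc (-1/2) n k *
                    ((-1) ^ (k + 1) * (Nat.factorial (k + 1) : ℚ) * (((k + 1).choose (m + 1)) : ℚ))
                  + (((k : ℚ) + 1) + 1 / 2) * Snc (-1/2) n (k + 1) *
                    ((-1) ^ (k + 1) * (Nat.factorial (k + 1) : ℚ) *
                      (((k + 1).choose (m + 1)) : ℚ))) := by
                simp only [Nat.choose_zero_succ, Nat.cast_zero, mul_zero, add_zero]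
                apply Finset.sum_congr rfl
                intro k _
                rw [hrec k]
                ring
            _ = ∑ k ∈ Finset.range (n + 1),
                  (Snc (-1/2) n k *
                    ((-1) ^ (k + 1) * (Nat.factorial (k + 1) : ℚ) * (((k + 1).choose (m + 1)) : ℚ))
                  + ((k : ℚ) + 1 / 2) * Snc (-1/2) n k *
                    ((-1) ^ k * (Nat.factorial k : ℚ) * ((k.choose (m + 1)) : ℚ))) := by
                rw [Finset.sum_add_distrib, Finset.sum_add_distrib, hH]
            _ = ∑ k ∈ Finset.range (n + 1),
                  ((-(((m : ℚ)) + 3 / 2)) *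
                    (Snc (-1/2) n k * (-1) ^ k * (Nat.factorial k : ℚ) * ((k.choose (m + 1)) : ℚ))
                  + (-(((m : ℚ)) + 1)) *
                    (Snc (-1/2) n k * (-1) ^ k * (Nat.factorial k : ℚ) * ((k.choose m) : ℚ))) := by
                apply Finset.sum_congr rfl
                intro k _
                have h := term_id k m
                linear_combination (Snc (-1/2) n k) * h
            _ = (-(((m : ℚ)) + 3 / 2)) *
                  ((-1) ^ n * (Nat.factorial (m + 1) : ℚ) * Snc (-1/2) n (m + 1))
                + (-(((m : ℚ)) + 1)) *
                  ((-1) ^ n * (Nat.factorial m : ℚ) * Snc (-1/2) n m) := by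
                rw [Finset.sum_add_distrib, ← Finset.mul_sum, ← Finset.mul_sum, ih (m + 1), ih m]
            _ = (-1) ^ (n + 1) * (Nat.factorial (m + 1) : ℚ) * Snc (-1/2) (n + 1) (m + 1) := by
                rw [hrec m, Nat.factorial_succ, pow_succ]
                push_cast
                ring

theorem stmt_6 (N j : ℕ) (hj : j ≤ N) :
    (1 / (Nat.factorial j : ℚ)) *
        ∑ k ∈ Finset.Icc j N,
          Snc (-1/2) N k * (-1) ^ k * (Nat.factorial k : ℚ) * (k.choose j : ℚ) =
      (-1) ^ N * Snc (-1/2) N j := by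
  have hsub : ∑ k ∈ Finset.Icc j N,
        Snc (-1/2) N k * (-1) ^ k * (Nat.factorial k : ℚ) * (k.choose j : ℚ)
      = ∑ k ∈ Finset.range (N + 1),
        Snc (-1/2) N k * (-1) ^ k * (Nat.factorial k : ℚ) * (k.choose j : ℚ) := by
    apply Finset.sum_subset
    · intro k hk
      simp only [Finset.mem_Icc] at hk
      simp only [Finset.mem_range]
      omega
    · intro k hk hk2
      simp only [Finset.mem_Icc, Finset.mem_range] at hk hk2
      have hkj : k < j := by omega
      rw [Nat.choose_eq_zero_of_lt hkj]
      simp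
  rw [hsub, key N j]
  have hne : (Nat.factorial j : ℚ) ≠ 0 := by
    exact_mod_cast j.factorial_ne_zero
  field_simp
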